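/- arXiv:2112.07975 — 2 statements merged into one kernel-verified Lean document; each statement's English description precedes it below -/
import Mathlib

section
/- Let N be a rank-3 tensor in 4 dimensions and M^{(1)}_{λαβ} := N_{μνλ} ε^{μν}_{ αβ}. Then contracting with ε gives ε^{αμ}_{ βγ} M^{(1)}_{αμν} = 2(−1)^{s+1} [ (N^{(2)}_{[β} − N^{(3)}_{[β}) g_{γ]ν} + N_{[βγ]ν} ], where N^{(2)}_μ := N_{αμβ} g^{αβ}, N^{(3)}_μ := N_{μαβ} g^{αβ}, and square brackets denote antisymmetrization over β,γ with weight 1/2. -/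
open scoped BigOperators

/-- The totally antisymmetric Levi-Civita symbol in 4 dimensions, normalized by
`eps 0 1 2 3 = 1`, realized as a determinant of basis (Kronecker delta) rows. -/
noncomputable def eps (i j k l : Fin 4) : ℝ :=
  Matrix.det (Matrix.of fun r c => if (![i, j, k, l]) r = c then (1 : ℝ) else 0)

/-- Diagonal metric with entries `η i = ±1`. -/
def gdiag (η : Fin 4 → ℝ) (a b : Fin 4) : ℝ := if a = b then η a else 0

/-- `M⁽¹⁾_{λαβ} = N_{μνλ} ε^{μν}_{  αβ}` (indices raised with the diagonal metric `η`). -/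
noncomputable def M1 (η : Fin 4 → ℝ) (N : Fin 4 → Fin 4 → Fin 4 → ℝ) (lam a b : Fin 4) : ℝ :=
  ∑ μ, ∑ ν, N μ ν lam * (η μ * η ν * eps μ ν a b)

/-- `M⁽²⁾_{ναβ} = N_{μνλ} ε^{μλ}_{  αβ}`. -/
noncomputable def M2 (η : Fin 4 → ℝ) (N : Fin 4 → Fin 4 → Fin 4 → ℝ) (n a b : Fin 4) : ℝ :=
  ∑ μ, ∑ lam, N μ n lam * (η μ * η lam * eps μ lam a b)

/-- `M⁽³⁾_{μαβ} = N_{μνλ} ε^{νλ}_{  αβ}`. -/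
noncomputable def M3 (η : Fin 4 → ℝ) (N : Fin 4 → Fin 4 → Fin 4 → ℝ) (m a b : Fin 4) : ℝ :=
  ∑ ν, ∑ lam, N m ν lam * (η ν * η lam * eps ν lam a b)

/-- The pseudo-trace `M^α = ε^{αμνλ} N_{μνλ}` (all indices of ε raised). -/
noncomputable def Mup (η : Fin 4 → ℝ) (N : Fin 4 → Fin 4 → Fin 4 → ℝ) (a : Fin 4) : ℝ :=
  ∑ μ, ∑ ν, ∑ lam, (η a * η μ * η ν * η lam * eps a μ ν lam) * N μ ν lam

/-- First trace `N⁽¹⁾_μ = N_{αβμ} g^{αβ}`. -/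
noncomputable def tr1 (η : Fin 4 → ℝ) (N : Fin 4 → Fin 4 → Fin 4 → ℝ) (m : Fin 4) : ℝ :=
  ∑ a, η a * N a a m

/-- Second trace `N⁽²⁾_μ = N_{αμβ} g^{αβ}`. -/
noncomputable def tr2 (η : Fin 4 → ℝ) (N : Fin 4 → Fin 4 → Fin 4 → ℝ) (m : Fin 4) : ℝ :=
  ∑ a, η a * N a m a

/-- Third trace `N⁽³⁾_μ = N_{μαβ} g^{αβ}`. -/
noncomputable def tr3 (η : Fin 4 → ℝ) (N : Fin 4 → Fin 4 → Fin 4 → ℝ) (m : Fin 4) : ℝ :=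
  ∑ a, η a * N m a a

/-- Pseudo-trace with lowered index, `N⁽⁴⁾_λ = M_λ = g_{λκ} ε^{κμνρ} N_{μνρ}`. -/
noncomputable def tr4 (η : Fin 4 → ℝ) (N : Fin 4 → Fin 4 → Fin 4 → ℝ) (lam : Fin 4) : ℝ :=
  η lam * Mup η N lam

/-!
Each `eps i j k l` is the determinant of rows `i, j, k, l` of the identity matrix, so a product of
two of them is the determinant of the Kronecker deltas `δ_{i_r j_s}`. When the first index is
contracted, only the one `μ` missing from `a, b, c` contributes, and Laplace expansion along the
first column leaves the `3 × 3` generalized Kronecker delta `det δ_{(a,b,c),(d,e,f)}`. On that term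
`η μ = (∏ η) η a η b η c = (-1)^s η a η b η c`, which is where the sign comes from; contracting the
`3 × 3` delta with `N` then produces the six terms of the right-hand side.
-/

open Matrix Finset Function

section KroneckerDeterminant

variable {R : Type*} [CommRing R] {ι α : Type*} [Fintype ι] [DecidableEq ι] [DecidableEq α]

theorem det_one_submatrix_of_not_injective {v : ι → α} (hv : ¬ Injective v) (w : ι → α) :
    ((1 : Matrix α α R).submatrix v w).det = 0 := by
  obtain ⟨r, r', hvr, hrr'⟩ : ∃ r r', v r = v r' ∧ r ≠ r' := by
    simpa [Injective] using hv
  exact det_zero_of_row_eq hrr' (funext fun s => congrArg (fun x => (1 : Matrix α α R) x (w s)) hvr)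

theorem det_one_submatrix_mul_det_one_submatrix (v w : ι → ι) :
    ((1 : Matrix ι ι R).submatrix v id).det * ((1 : Matrix ι ι R).submatrix w id).det =
      ((1 : Matrix ι ι R).submatrix v w).det := by
  rw [← det_transpose ((1 : Matrix ι ι R).submatrix w id), ← det_mul]
  congr 1
  ext r s
  simp [mul_apply, one_apply]

theorem det_one_submatrix_comp_perm (v w : ι → α) (σ : Equiv.Perm ι) :
    ((1 : Matrix α α R).submatrix (v ∘ σ) w).det =
      Equiv.Perm.sign σ * ((1 : Matrix α α R).submatrix v w).det :=
  det_permute σ ((1 : Matrix α α R).submatrix v w)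

theorem det_one_submatrix_mul_prod_comp (v : ι → ι) (η : ι → R) :
    ((1 : Matrix ι ι R).submatrix v id).det * ∏ r, η (v r) =
      ((1 : Matrix ι ι R).submatrix v id).det * ∏ i, η i := by
  by_cases hv : Injective v
  · rw [Fintype.prod_bijective v (Finite.injective_iff_bijective.mp hv) _ η fun _ => rfl]
  · simp [det_one_submatrix_of_not_injective hv]

theorem det_one_submatrix_cons_cons {n : ℕ} {μ : α} {a : Fin n → α} (hμ : μ ∉ Set.range a)
    (b : Fin n → α) :
    ((1 : Matrix α α R).submatrix (Fin.cons μ a : Fin (n + 1) → α) (Fin.cons μ b)).det =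
      ((1 : Matrix α α R).submatrix a b).det := by
  rw [det_succ_column_zero, Fin.sum_univ_succ, sum_eq_zero fun i _ => ?_]
  · rw [add_zero, Fin.val_zero, pow_zero, one_mul, submatrix_apply, Fin.cons_zero, Fin.cons_zero,
      one_apply_eq, one_mul]
    rfl
  · rw [submatrix_apply, Fin.cons_succ, Fin.cons_zero, one_apply_ne fun h => hμ ⟨i, h⟩,
      mul_zero, zero_mul]

theorem sum_det_one_submatrix_cons_mul {n : ℕ} (a b : Fin n → Fin (n + 1)) :
    ∑ μ, ((1 : Matrix _ _ R).submatrix (Fin.cons μ a) id).det *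
      ((1 : Matrix _ _ R).submatrix (Fin.cons μ b) id).det =
      ((1 : Matrix _ _ R).submatrix a b).det := by
  have hterm : ∀ μ, ((1 : Matrix _ _ R).submatrix (Fin.cons μ a) id).det *
      ((1 : Matrix _ _ R).submatrix (Fin.cons μ b) id).det =
      if μ ∈ univ.image a then 0 else ((1 : Matrix _ _ R).submatrix a b).det := by
    intro μ
    rw [det_one_submatrix_mul_det_one_submatrix]
    split_ifs with hμ
    · obtain ⟨i, -, rfl⟩ := mem_image.mp hμ
      exact det_one_submatrix_of_not_injective
        (fun h => Fin.succ_ne_zero i (@h i.succ 0 (by simp))) _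
    · exact det_one_submatrix_cons_cons (by simpa using hμ) b
  rw [sum_congr rfl fun μ _ => hterm μ, sum_ite, sum_const_zero, zero_add, sum_const]
  -- an injective `a` misses exactly one `μ`; otherwise the minor has two equal rows
  by_cases ha : Injective a
  · rw [filter_not, filter_mem_eq_inter, univ_inter, card_sdiff, inter_univ,
      card_image_of_injective _ ha]
    simp
  · simp [det_one_submatrix_of_not_injective ha]

theorem sum_mul_det_one_submatrix_three (T : ι → ι → ι → R) (β γ ν : ι) :
    ∑ α, ∑ ρ, ∑ σ, T ρ σ α * ((1 : Matrix ι ι R).submatrix ![α, β, γ] ![ν, ρ, σ]).det =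
      T β γ ν - T γ β ν + (if γ = ν then ∑ α, (T α β α - T β α α) else 0)
        - (if β = ν then ∑ α, (T α γ α - T γ α α) else 0) := by
  -- `one_apply` would produce `if` terms whose `Decidable` instances still mention `![…] k`
  have hone : ∀ i j : ι, (1 : Matrix ι ι R) i j = (Pi.single j 1 : ι → R) i := fun i j => by
    simp [one_apply, Pi.single_apply]
  simp only [det_fin_three, submatrix_apply, hone, cons_val_zero, cons_val_one, cons_val_two]
  simp only [Pi.single_apply, mul_ite, mul_one, mul_zero, tail_cons, head_cons, mul_sub, mul_add,
    sum_sub_distrib, sum_add_distrib, sum_ite_eq, sum_ite_eq', mem_univ, ↓reduceIte, sum_ite_irrel,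
    sum_const_zero]
  split_ifs <;> ring

end KroneckerDeterminant

theorem eps_eq_det_one_submatrix (i j k l : Fin 4) :
    eps i j k l = ((1 : Matrix (Fin 4) (Fin 4) ℝ).submatrix ![i, j, k, l] id).det :=
  rfl

theorem eps_swap_first (i j k l : Fin 4) : eps j i k l = -eps i j k l := by
  have h : ![j, i, k, l] = ![i, j, k, l] ∘ Equiv.swap 0 1 := by
    ext r; fin_cases r <;> rfl
  rw [eps_eq_det_one_submatrix j, h, det_one_submatrix_comp_perm, ← eps_eq_det_one_submatrix,
    Equiv.Perm.sign_swap (by decide)]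
  simp

theorem eps_swap_pairs (i j k l : Fin 4) : eps k l i j = eps i j k l := by
  have h : ![k, l, i, j] =
      ![i, j, k, l] ∘ (Equiv.swap 0 2 * Equiv.swap 1 3 : Equiv.Perm (Fin 4)) := by
    ext r; fin_cases r <;> rfl
  rw [eps_eq_det_one_submatrix k, h, det_one_submatrix_comp_perm, ← eps_eq_det_one_submatrix,
    Equiv.Perm.sign_mul, Equiv.Perm.sign_swap (by decide), Equiv.Perm.sign_swap (by decide)]
  simp

theorem sum_mul_eps_mul_eps (η : Fin 4 → ℝ) (hη : ∀ i, η i * η i = 1) (a b c d e f : Fin 4) :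
    ∑ μ, η μ * (eps μ a b c * eps μ d e f) =
      (∏ i, η i) * (η a * η b * η c) *
        ((1 : Matrix (Fin 4) (Fin 4) ℝ).submatrix ![a, b, c] ![d, e, f]).det := by
  have hweight : ∀ μ, η μ * eps μ a b c = (∏ i, η i) * (η a * η b * η c) * eps μ a b c := by
    intro μ
    -- a nonzero `eps μ a b c` means `![μ, a, b, c]` enumerates `Fin 4`
    have h : eps μ a b c * (η μ * η a * η b * η c) = eps μ a b c * ∏ i, η i := by
      have h := det_one_submatrix_mul_prod_comp (R := ℝ) ![μ, a, b, c] η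
      rwa [Fin.prod_univ_four] at h
    linear_combination (η a * η b * η c) * h - η μ * eps μ a b c * hη a
      - η μ * eps μ a b c * (η a * η a) * hη b - η μ * eps μ a b c * (η a * η a * η b * η b) * hη c
  calc ∑ μ, η μ * (eps μ a b c * eps μ d e f)
      = ∑ μ, (∏ i, η i) * (η a * η b * η c) * (eps μ a b c * eps μ d e f) :=
        sum_congr rfl fun μ _ => by rw [← mul_assoc, hweight, mul_assoc]
    _ = _ := by
        rw [← mul_sum]
        exact congrArg _ (sum_det_one_submatrix_cons_mul ![a, b, c] ![d, e, f])

theorem sum_eps_mul_M1 (η : Fin 4 → ℝ) (hη : ∀ i, η i * η i = 1)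
    (N : Fin 4 → Fin 4 → Fin 4 → ℝ) (β γ ν : Fin 4) :
    ∑ α, ∑ μ, (η α * η μ * eps α μ β γ) * M1 η N α μ ν =
      -(∏ i, η i) * (η β * η γ) * ∑ α, ∑ ρ, ∑ σ, η ρ * η σ * N ρ σ α *
        ((1 : Matrix (Fin 4) (Fin 4) ℝ).submatrix ![α, β, γ] ![ν, ρ, σ]).det := by
  simp only [M1, mul_sum]
  refine sum_congr rfl fun α _ => ?_
  rw [sum_comm]
  refine sum_congr rfl fun ρ _ => ?_
  rw [sum_comm]
  refine sum_congr rfl fun σ _ => ?_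
  have hcontract := sum_mul_eps_mul_eps η hη α β γ ν ρ σ
  calc ∑ μ, η α * η μ * eps α μ β γ * (N ρ σ α * (η ρ * η σ * eps ρ σ μ ν))
      = -(η α * η ρ * η σ * N ρ σ α) * ∑ μ, η μ * (eps μ α β γ * eps μ ν ρ σ) := by
        rw [mul_sum]
        refine sum_congr rfl fun μ _ => ?_
        rw [eps_swap_first μ, eps_swap_pairs ρ σ]
        ring
    _ = _ := by
        rw [hcontract]
        linear_combination (-(∏ i, η i) * (η β * η γ) * (η ρ * η σ * N ρ σ α) *
          ((1 : Matrix (Fin 4) (Fin 4) ℝ).submatrix ![α, β, γ] ![ν, ρ, σ]).det) * hη α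

/-- `ε^{αμ}_{  βγ} M⁽¹⁾_{αμν} = 2(−1)^{s+1} [ (N⁽²⁾_{[β} − N⁽³⁾_{[β}) g_{γ]ν} + N_{[βγ]ν} ]`. -/
theorem eps_M1_contraction (s : ℕ) (η : Fin 4 → ℝ) (hη : ∀ i, η i = 1 ∨ η i = -1)
    (hs : ((-1 : ℝ)) ^ s = ∏ i, η i)
    (N : Fin 4 → Fin 4 → Fin 4 → ℝ) (β γ ν : Fin 4) :
    (∑ α, ∑ μ, (η α * η μ * eps α μ β γ) * M1 η N α μ ν) =
      2 * (-1 : ℝ) ^ (s + 1) *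
        (((tr2 η N β - tr3 η N β) * gdiag η γ ν - (tr2 η N γ - tr3 η N γ) * gdiag η β ν) / 2
          + (N β γ ν - N γ β ν) / 2) := by
  have hηη : ∀ i, η i * η i = 1 := fun i => by rcases hη i with h | h <;> simp [h]
  rw [sum_eps_mul_M1 η hηη, sum_mul_det_one_submatrix_three (fun ρ σ α => η ρ * η σ * N ρ σ α),
    pow_succ, hs]
  have htrace : ∀ b, ∑ α, (η α * η b * N α b α - η b * η α * N b α α) =
      η b * (tr2 η N b - tr3 η N b) := by
    intro b
    simp only [tr2, tr3, mul_sub, mul_sum, ← sum_sub_distrib]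
    exact sum_congr rfl fun α _ => by ring
  have hsq : ∀ i, η i ^ 2 = 1 := fun i => by rw [sq, hηη]
  simp only [htrace, gdiag]
  split_ifs <;> ring_nf <;> simp only [hsq] <;> ring
end

section
/- Contracting the 30-parameter tensor equation of the paper with ε^{λαμν} yields a linear relation among only the traces and pseudo-trace: γ_{41} N^{(1)}_λ + γ_{42} N^{(2)}_λ + γ_{43} N^{(3)}_λ + γ_{44} N^{(4)}_λ = B^{(4)}_λ, where γ_{41} = −2(−1)^s (b_{21}+b_{22}+b_{23}+b_{31}+b_{32}+b_{33} − 3b_1), γ_{42} = −2(−1)^s (b_{11}+b_{12}+b_{13}−b_{31}−b_{32}−b_{33} − 3b_2), γ_{43} = 2(−1)^s (b_{11}+b_{12}+b_{13}+b_{21}+b_{22}+b_{23}+3b_3), γ_{44} = a_1+a_2+a_3−a_4−a_5−a_6, and B^{(4)}_λ := ε^{λμνρ} B_{μνρ}, N^{(4)}_λ := ε^{λμνρ} N_{μνρ}. -/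
/-!
Since `ε_{λμνρ}` vanishes unless its indices are a permutation of `0 1 2 3`, raising all four
of them multiplies it by `∏ᵢ gᵢᵢ = (-1)^s`; hence `N⁽⁴⁾_λ = g_λλ (-1)^s ε_{λμνρ} N_{μνρ}` with
the flat symbol. Contract eq. (3) with the flat symbol: the six permuted copies of `N` give
`±N⁽⁴⁾` according to the sign of the permutation, every term carrying a metric factor dies
because `ε` is antisymmetric, and the dual terms `M⁽ⁱ⁾` and `ε_{ραμν} N^{(j)ρ}` reduce to
traces through `ε_{κλab} ε_{μνab} = 2(δ_κμ δ_λν - δ_κν δ_λμ)` and `ε_{κabc} ε_{μabc} = 6 δ_κμ`.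
Multiplying back by `g_λλ (-1)^s` and using `g_λλ² = 1` gives the relation.
-/

open scoped BigOperators

/-- The 30-parameter linear operation of eq. (3) of the paper, acting on a rank-3
tensor `N` on a 4-dimensional space with diagonal metric `η` of signature `s`. -/
noncomputable def LHS (a1 a2 a3 a4 a5 a6 a71 a72 a73 a81 a82 a83 a91 a92 a93
    b11 b12 b13 b21 b22 b23 b31 b32 b33 b1 b2 b3 c1 c2 c3 : ℝ)
    (η : Fin 4 → ℝ) (N : Fin 4 → Fin 4 → Fin 4 → ℝ) (α μ ν : Fin 4) : ℝ :=
  a1 * N α μ ν + a2 * N ν α μ + a3 * N μ ν α + a4 * N α ν μ + a5 * N ν μ α + a6 * N μ α ν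
  + (a71 * tr1 η N μ + a72 * tr2 η N μ + a73 * tr3 η N μ) * gdiag η α ν
  + (a81 * tr1 η N ν + a82 * tr2 η N ν + a83 * tr3 η N ν) * gdiag η α μ
  + (a91 * tr1 η N α + a92 * tr2 η N α + a93 * tr3 η N α) * gdiag η μ ν
  + b11 * M1 η N α μ ν + b12 * M1 η N ν α μ + b13 * M1 η N μ ν α
  + b21 * M2 η N α μ ν + b22 * M2 η N ν α μ + b23 * M2 η N μ ν α
  + b31 * M3 η N α μ ν + b32 * M3 η N ν α μ + b33 * M3 η N μ ν α
  + (∑ ρ, eps ρ α μ ν * (η ρ) * (b1 * tr1 η N ρ + b2 * tr2 η N ρ + b3 * tr3 η N ρ))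
  + c1 * tr4 η N μ * gdiag η α ν + c2 * tr4 η N ν * gdiag η α μ + c3 * tr4 η N α * gdiag η μ ν

/-- The 4×4 trace matrix `Γ`, whose rows are obtained by contracting the
30-parameter equation with `g^{αμ}`, `g^{αν}`, `g^{μν}` and `ε^{λαμν}`. -/
noncomputable def Γmat (s : ℕ) (a1 a2 a3 a4 a5 a6 a71 a72 a73 a81 a82 a83 a91 a92 a93
    b11 b12 b13 b21 b22 b23 b31 b32 b33 b1 b2 b3 c1 c2 c3 : ℝ) :
    Matrix (Fin 4) (Fin 4) ℝ :=
  Matrix.of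
    ![![a1 + a6 + a71 + 4*a81 + a91, a3 + a4 + a72 + 4*a82 + a92,
        a2 + a5 + a73 + 4*a83 + a93, -b11 + b13 + b21 - b23 - b31 + b33 + c1 + 4*c2 + c3],
      ![a2 + a4 + 4*a71 + a81 + a91, a1 + a5 + 4*a72 + a82 + a92,
        a3 + a6 + 4*a73 + a83 + a93, b11 - b12 - b21 + b22 + b31 - b32 + 4*c1 + c2 + c3],
      ![a3 + a5 + a71 + a81 + 4*a91, a2 + a6 + a72 + a82 + 4*a92,
        a1 + a4 + a73 + a83 + 4*a93, b12 - b13 - b22 + b23 + b32 - b33 + c1 + c2 + 4*c3],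
      ![-2*(-1:ℝ)^s*(b21 + b22 + b23 + b31 + b32 + b33 - 3*b1),
        -2*(-1:ℝ)^s*(b11 + b12 + b13 - b31 - b32 - b33 - 3*b2),
        2*(-1:ℝ)^s*(b11 + b12 + b13 + b21 + b22 + b23 + 3*b3),
        a1 + a2 + a3 - a4 - a5 - a6]]

/-- The 15×15 coefficient matrix `A` formed from the 15 permuted/dualized equations,
in the column order
`(N_{αμν},N_{ναμ},N_{μνα},N_{ανμ},N_{νμα},N_{μαν},M¹_{αμν},M¹_{ναμ},M¹_{μνα},
  M²_{αμν},M²_{ναμ},M²_{μνα},M³_{αμν},M³_{ναμ},M³_{μνα})`. -/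
noncomputable def Amat (s : ℕ) (a1 a2 a3 a4 a5 a6
    b11 b12 b13 b21 b22 b23 b31 b32 b33 : ℝ) :
    Matrix (Fin 15) (Fin 15) ℝ :=
  let σ : ℝ := (-1:ℝ)^s
  let q1 := σ*(2*b12 - b11 - b13); let q2 := σ*(2*b22 - b21 - b23); let q3 := σ*(2*b32 - b31 - b33)
  let r1 := σ*(b11 + b12 - 2*b13); let r2 := σ*(b21 + b22 - 2*b23); let r3 := σ*(b31 + b32 - 2*b33)
  let t1 := σ*(2*b11 - b12 - b13); let t2 := σ*(2*b21 - b22 - b23); let t3 := σ*(2*b31 - b32 - b33)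
  Matrix.of
    ![![a1, a2, a3, a4, a5, a6, b11, b12, b13, b21, b22, b23, b31, b32, b33],
      ![a3, a1, a2, a6, a4, a5, b13, b11, b12, b23, b21, b22, b33, b31, b32],
      ![a2, a3, a1, a5, a6, a4, b12, b13, b11, b22, b23, b21, b32, b33, b31],
      ![a4, a6, a5, a1, a3, a2, -b11, -b13, -b12, -b21, -b23, -b22, -b31, -b33, -b32],
      ![a5, a4, a6, a2, a1, a3, -b12, -b11, -b13, -b22, -b21, -b23, -b32, -b31, -b33],
      ![a6, a5, a4, a3, a2, a1, -b13, -b12, -b11, -b23, -b22, -b21, -b33, -b32, -b31],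
      ![q1, q3, -q2, q2, -q3, -q1, 0, a1 - a6, 0, 0, a4 - a3, 0, 0, a2 - a5, 0],
      ![q3, -q2, q1, -q3, -q1, q2, a1 - a6, 0, 0, a4 - a3, 0, 0, a2 - a5, 0, 0],
      ![-q2, q1, q3, -q1, q2, -q3, 0, 0, a1 - a6, 0, 0, a4 - a3, 0, 0, a2 - a5],
      ![r2, -r1, -r3, r1, -r2, r3, 0, 0, a2 - a4, 0, 0, a5 - a1, 0, 0, a3 - a6],
      ![-r1, -r3, r2, -r2, r3, r1, 0, a2 - a4, 0, 0, a5 - a1, 0, 0, a3 - a6, 0],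
      ![-r3, r2, -r1, r3, r1, -r2, a2 - a4, 0, 0, a5 - a1, 0, 0, a3 - a6, 0, 0],
      ![t3, -t2, t1, -t3, -t1, t2, a3 - a5, 0, 0, a6 - a2, 0, 0, a1 - a4, 0, 0],
      ![-t2, t1, t3, -t1, t2, -t3, 0, 0, a3 - a5, 0, 0, a6 - a2, 0, 0, a1 - a4],
      ![t1, t3, -t2, t2, -t3, -t1, 0, a3 - a5, 0, 0, a6 - a2, 0, 0, a1 - a4, 0]]

/-- A decidable model of `eps`, so that finite identities about `eps` can be checked by
`decide`. -/
def leviCivita (i j k l : Fin 4) : ℤ :=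
  Int.sign ((j : ℤ) - i) * Int.sign ((k : ℤ) - i) * Int.sign ((l : ℤ) - i) *
    Int.sign ((k : ℤ) - j) * Int.sign ((l : ℤ) - j) * Int.sign ((l : ℤ) - k)

theorem eps_eq_leviCivita (i j k l : Fin 4) : eps i j k l = leviCivita i j k l := by
  have h : ∀ i j k l : Fin 4,
      Matrix.det (Matrix.of fun r c => if (![i, j, k, l]) r = c then (1 : ℤ) else 0) =
        leviCivita i j k l := by
    simp only [Matrix.det_succ_row_zero, Fin.sum_univ_succ, Matrix.det_fin_zero,
      Fin.sum_univ_zero]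
    decide +kernel
  rw [eps, ← h, Int.cast_det]
  congr 1
  ext r c
  simp [apply_ite]

theorem eps_eq_zero_of_not_injective {i j k l : Fin 4} (h : ¬ Function.Injective ![i, j, k, l]) :
    eps i j k l = 0 := by
  obtain ⟨r, r', hrr', hne⟩ : ∃ r r', ![i, j, k, l] r = ![i, j, k, l] r' ∧ r ≠ r' := by
    simpa [Function.Injective] using h
  exact Matrix.det_zero_of_row_eq hne (by ext c; simp [hrr'])

theorem eps_mul_prod (η : Fin 4 → ℝ) (i j k l : Fin 4) :
    eps i j k l * (η i * η j * η k * η l) = eps i j k l * ∏ m, η m := by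
  by_cases h : Function.Injective ![i, j, k, l]
  · rw [← Equiv.prod_comp (Equiv.ofBijective _ h.bijective_of_finite)]
    simp [Fin.prod_univ_four, mul_assoc]
  · simp [eps_eq_zero_of_not_injective h]

theorem eps_rotate_last (i j k l : Fin 4) : eps i k l j = eps i j k l := by
  have h : ∀ i j k l : Fin 4, leviCivita i k l j = leviCivita i j k l := by decide
  rw [eps_eq_leviCivita, eps_eq_leviCivita, h]

theorem eps_swap_last (i j k l : Fin 4) : eps i j l k = -eps i j k l := by
  have h : ∀ i j k l : Fin 4, leviCivita i j l k = -leviCivita i j k l := by decide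
  rw [eps_eq_leviCivita, eps_eq_leviCivita, h, Int.cast_neg]

theorem sum_eps_mul_eps (i j k l : Fin 4) :
    ∑ a, ∑ b, eps i j a b * eps k l a b =
      2 * ((if i = k then 1 else 0) * (if j = l then 1 else 0) -
        (if i = l then 1 else 0) * (if j = k then 1 else 0)) := by
  have h : ∀ i j k l : Fin 4, ∑ a, ∑ b, leviCivita i j a b * leviCivita k l a b =
      2 * ((if i = k then 1 else 0) * (if j = l then 1 else 0) -
        (if i = l then 1 else 0) * (if j = k then 1 else 0)) := by decide
  simp only [eps_eq_leviCivita]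
  exact_mod_cast h i j k l

theorem sum_eps_mul_eps_three (i j : Fin 4) :
    ∑ a, ∑ b, ∑ c, eps i a b c * eps j a b c = 6 * if i = j then 1 else 0 := by
  have h : ∀ i j : Fin 4, ∑ a, ∑ b, ∑ c, leviCivita i a b c * leviCivita j a b c =
      6 * if i = j then 1 else 0 := by decide
  simp only [eps_eq_leviCivita]
  exact_mod_cast h i j

theorem Fintype.sum_comm_rotate {α β γ M : Type*} [Fintype α] [Fintype β] [Fintype γ]
    [AddCommMonoid M] (f : α → β → γ → M) :
    ∑ a, ∑ b, ∑ c, f a b c = ∑ c, ∑ a, ∑ b, f a b c :=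
  (Finset.sum_congr rfl fun _ _ => Finset.sum_comm).trans Finset.sum_comm

section Contraction

variable (T : Fin 4 → Fin 4 → Fin 4 → ℝ) (lam : Fin 4) (η : Fin 4 → ℝ)

noncomputable def epsContract : ℝ :=
  ∑ μ, ∑ ν, ∑ ρ, eps lam μ ν ρ * T μ ν ρ

theorem Mup_eq_epsContract : Mup η T lam = (∏ i, η i) * epsContract T lam := by
  simp only [Mup, epsContract, Finset.mul_sum]
  refine Finset.sum_congr rfl fun μ _ => Finset.sum_congr rfl fun ν _ =>
    Finset.sum_congr rfl fun ρ _ => ?_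
  rw [mul_comm (_ * _ * _ * _) (eps _ _ _ _), eps_mul_prod]
  ring

theorem epsContract_add (f g : Fin 4 → Fin 4 → Fin 4 → ℝ) :
    epsContract (fun a b c => f a b c + g a b c) lam = epsContract f lam + epsContract g lam := by
  simp only [epsContract, mul_add, Finset.sum_add_distrib]

theorem epsContract_const_mul (r : ℝ) :
    epsContract (fun a b c => r * T a b c) lam = r * epsContract T lam := by
  simp only [epsContract, Finset.mul_sum, mul_left_comm r]

theorem epsContract_sum (f : Fin 4 → Fin 4 → Fin 4 → Fin 4 → ℝ) :
    epsContract (fun a b c => ∑ i, f i a b c) lam = ∑ i, epsContract (f i) lam := by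
  simp only [epsContract, Finset.mul_sum]
  exact (Finset.sum_congr rfl fun _ _ => Fintype.sum_comm_rotate _).trans Finset.sum_comm

theorem epsContract_rotate : epsContract (fun a b c => T c a b) lam = epsContract T lam := by
  rw [epsContract, Fintype.sum_comm_rotate]
  simp only [epsContract, eps_rotate_last]

theorem epsContract_rotate' : epsContract (fun a b c => T b c a) lam = epsContract T lam :=
  (epsContract_rotate (fun a b c => T b c a) lam).symm

theorem epsContract_swap₁₂ : epsContract (fun a b c => T a c b) lam = -epsContract T lam := by
  simp only [epsContract, ← Finset.sum_neg_distrib]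
  refine Finset.sum_congr rfl fun a _ => ?_
  rw [Finset.sum_comm]
  exact Finset.sum_congr rfl fun b _ => Finset.sum_congr rfl fun c _ => by
    rw [eps_swap_last lam a b c, neg_mul]

theorem epsContract_swap₀₂ : epsContract (fun a b c => T c b a) lam = -epsContract T lam := by
  rw [epsContract_swap₁₂ (fun a b c => T b c a), epsContract_rotate']

theorem epsContract_swap₀₁ : epsContract (fun a b c => T b a c) lam = -epsContract T lam := by
  rw [epsContract_swap₁₂ (fun a b c => T c a b), epsContract_rotate]

theorem epsContract_eq_zero_of_support
    (hT : ∀ a b c, T a b c ≠ 0 → ¬ Function.Injective ![lam, a, b, c]) :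
    epsContract T lam = 0 :=
  Finset.sum_eq_zero fun a _ => Finset.sum_eq_zero fun b _ => Finset.sum_eq_zero fun c _ => by
    by_cases h : T a b c = 0
    · rw [h, mul_zero]
    · rw [eps_eq_zero_of_not_injective (hT a b c h), zero_mul]


theorem epsContract_mul_gdiag₀₁ (f : Fin 4 → ℝ) :
    epsContract (fun a b c => f c * gdiag η a b) lam = 0 :=
  epsContract_eq_zero_of_support _ _ fun a b c h hinj => h <| by
    rw [gdiag, if_neg fun hab => absurd (hinj (a₁ := 1) (a₂ := 2) (by simp [hab])) (by decide),
      mul_zero]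

theorem epsContract_mul_gdiag₀₂ (f : Fin 4 → ℝ) :
    epsContract (fun a b c => f b * gdiag η a c) lam = 0 :=
  epsContract_eq_zero_of_support _ _ fun a b c h hinj => h <| by
    rw [gdiag, if_neg fun hac => absurd (hinj (a₁ := 1) (a₂ := 3) (by simp [hac])) (by decide),
      mul_zero]

theorem epsContract_mul_gdiag₁₂ (f : Fin 4 → ℝ) :
    epsContract (fun a b c => f a * gdiag η b c) lam = 0 :=
  epsContract_eq_zero_of_support _ _ fun a b c h hinj => h <| by
    rw [gdiag, if_neg fun hbc => absurd (hinj (a₁ := 2) (a₂ := 3) (by simp [hbc])) (by decide),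
      mul_zero]

theorem epsContract_dual (P : Fin 4 → Fin 4 → Fin 4 → ℝ) :
    epsContract (fun l a b => ∑ μ, ∑ ν, P μ ν l * eps μ ν a b) lam =
      2 * (∑ l, P lam l l - ∑ l, P l lam l) := by
  have h : ∀ μ ν, epsContract (fun l a b => P μ ν l * eps μ ν a b) lam =
      2 * ∑ l, P μ ν l * ((if lam = μ then 1 else 0) * (if l = ν then 1 else 0) -
        (if lam = ν then 1 else 0) * (if l = μ then 1 else 0)) := by
    intro μ ν
    simp only [Finset.mul_sum, mul_left_comm (2 : ℝ), ← sum_eps_mul_eps, epsContract,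
      mul_left_comm (eps _ _ _ _)]
  simp [epsContract_sum, h, ← Finset.mul_sum, mul_sub, Finset.sum_sub_distrib,
    Finset.sum_ite_eq, Finset.sum_ite_eq']

variable (N : Fin 4 → Fin 4 → Fin 4 → ℝ)

theorem epsContract_M1 : epsContract (M1 η N) lam = 2 * η lam * (tr3 η N lam - tr2 η N lam) := by
  have h : M1 η N = fun l a b => ∑ μ, ∑ ν, (η μ * η ν * N μ ν l) * eps μ ν a b := by
    funext l a b
    simp only [M1, mul_assoc, mul_left_comm (N _ _ _)]
  rw [h, epsContract_dual]
  simp only [tr2, tr3, mul_sub, Finset.mul_sum, mul_assoc, mul_left_comm (η _) (η lam)]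

theorem epsContract_M2 : epsContract (M2 η N) lam = 2 * η lam * (tr3 η N lam - tr1 η N lam) := by
  have h : M2 η N = fun n a b => ∑ μ, ∑ l, (η μ * η l * N μ n l) * eps μ l a b := by
    funext n a b
    simp only [M2, mul_assoc, mul_left_comm (N _ _ _)]
  rw [h, epsContract_dual]
  simp only [tr1, tr3, mul_sub, Finset.mul_sum, mul_assoc, mul_left_comm (η _) (η lam)]

theorem epsContract_M3 : epsContract (M3 η N) lam = 2 * η lam * (tr2 η N lam - tr1 η N lam) := by
  have h : M3 η N = fun m a b => ∑ ν, ∑ l, (η ν * η l * N m ν l) * eps ν l a b := by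
    funext m a b
    simp only [M3, mul_assoc, mul_left_comm (N _ _ _)]
  rw [h, epsContract_dual]
  simp only [tr1, tr2, mul_sub, Finset.mul_sum, mul_assoc, mul_left_comm (η _) (η lam)]

theorem epsContract_sum_eps_mul (V : Fin 4 → ℝ) :
    epsContract (fun a b c => ∑ ρ, eps ρ a b c * η ρ * V ρ) lam = 6 * η lam * V lam := by
  have h : ∀ ρ, epsContract (fun a b c => eps ρ a b c * η ρ * V ρ) lam =
      η ρ * V ρ * ∑ a, ∑ b, ∑ c, eps lam a b c * eps ρ a b c := by
    intro ρ
    simp only [epsContract, Finset.mul_sum]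
    congr! 3 with a _ b _ c
    ring
  simp only [epsContract_sum, h, sum_eps_mul_eps_three, mul_ite, mul_one, mul_zero,
    Finset.sum_ite_eq, Finset.mem_univ, ↓reduceIte]
  ring

variable (a1 a2 a3 a4 a5 a6 a71 a72 a73 a81 a82 a83 a91 a92 a93
  b11 b12 b13 b21 b22 b23 b31 b32 b33 b1 b2 b3 c1 c2 c3 : ℝ)

theorem epsContract_LHS :
    epsContract (fun α μ ν => LHS a1 a2 a3 a4 a5 a6 a71 a72 a73 a81 a82 a83 a91 a92 a93
      b11 b12 b13 b21 b22 b23 b31 b32 b33 b1 b2 b3 c1 c2 c3 η N α μ ν) lam =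
      (a1 + a2 + a3 - a4 - a5 - a6) * epsContract N lam
      + 2 * η lam * ((b11 + b12 + b13) * (tr3 η N lam - tr2 η N lam)
        + (b21 + b22 + b23) * (tr3 η N lam - tr1 η N lam)
        + (b31 + b32 + b33) * (tr2 η N lam - tr1 η N lam)
        + 3 * (b1 * tr1 η N lam + b2 * tr2 η N lam + b3 * tr3 η N lam)) := by
  simp only [LHS, epsContract_add, epsContract_const_mul, epsContract_mul_gdiag₀₁,
    epsContract_mul_gdiag₀₂, epsContract_mul_gdiag₁₂, epsContract_sum_eps_mul]
  rw [epsContract_rotate N, epsContract_rotate' N, epsContract_swap₁₂ N,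
    epsContract_swap₀₂ N, epsContract_swap₀₁ N,
    epsContract_rotate (M1 η N), epsContract_rotate' (M1 η N),
    epsContract_rotate (M2 η N), epsContract_rotate' (M2 η N),
    epsContract_rotate (M3 η N), epsContract_rotate' (M3 η N),
    epsContract_M1, epsContract_M2, epsContract_M3]
  ring

end Contraction

/-- Contracting the 30-parameter equation with `ε^{λαμν}` yields the trace relation
`γ₄₁ N⁽¹⁾_λ + γ₄₂ N⁽²⁾_λ + γ₄₃ N⁽³⁾_λ + γ₄₄ N⁽⁴⁾_λ = B⁽⁴⁾_λ` with the stated `γ₄ⱼ`. -/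
theorem pseudo_trace_relation (s : ℕ) (η : Fin 4 → ℝ) (hη : ∀ i, η i = 1 ∨ η i = -1)
    (hs : ((-1 : ℝ)) ^ s = ∏ i, η i)
    (a1 a2 a3 a4 a5 a6 a71 a72 a73 a81 a82 a83 a91 a92 a93
      b11 b12 b13 b21 b22 b23 b31 b32 b33 b1 b2 b3 c1 c2 c3 : ℝ)
    (N B : Fin 4 → Fin 4 → Fin 4 → ℝ)
    (heq : ∀ α μ ν, LHS a1 a2 a3 a4 a5 a6 a71 a72 a73 a81 a82 a83 a91 a92 a93 b11 b12 b13 b21 b22 b23 b31 b32 b33 b1 b2 b3 c1 c2 c3 η N α μ ν = B α μ ν) :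
    ∀ lam,
      (-2*(-1:ℝ)^s*(b21 + b22 + b23 + b31 + b32 + b33 - 3*b1)) * tr1 η N lam
      + (-2*(-1:ℝ)^s*(b11 + b12 + b13 - b31 - b32 - b33 - 3*b2)) * tr2 η N lam
      + (2*(-1:ℝ)^s*(b11 + b12 + b13 + b21 + b22 + b23 + 3*b3)) * tr3 η N lam
      + (a1 + a2 + a3 - a4 - a5 - a6) * tr4 η N lam
      = tr4 η B lam := by
  intro lam
  have hB : epsContract B lam = epsContract (fun α μ ν => LHS a1 a2 a3 a4 a5 a6 a71 a72 a73
      a81 a82 a83 a91 a92 a93 b11 b12 b13 b21 b22 b23 b31 b32 b33 b1 b2 b3 c1 c2 c3 η N α μ ν)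
      lam := by
    simp only [heq]
  simp only [tr4, Mup_eq_epsContract]
  rw [hB, epsContract_LHS, ← hs]
  rcases hη lam with h | h <;> rw [h] <;> ring
end
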